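/- On the 6-dimensional complex vector space Sym of symmetric 3 × 3 complex matrices X = (x_{ij}), consider the quadratic forms q₃(X) = tr(adj X) = (x₂₂x₃₃ − x₂₃²) + (x₁₁x₃₃ − x₁₃²) + (x₁₁x₂₂ − x₁₂²), q₂(X) = (x₂₂x₃₃ − x₂₃²) + (x₁₁x₃₃ − x₁₃²), and q₁(X) = x₂₂x₃₃ − x₂₃², where adj X denotes the adjugate (matrix of cofactors) of X. Then q₃ has rank 6 (it is nondegenerate), q₂ has rank 4, and q₁ has rank 3. (These are the projectivized tangent cones of a hyperplane section of the Lagrangian Grassmannian LG(3,6) at a singular point, for hyperplanes in the three singular orbits; in particular a hyperplane section corresponding to a general point of the dual quartic hypersurface has an ordinary node.) -/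
import Mathlib

open Module

/-- The `6`-dimensional complex vector space of symmetric `3 × 3` complex matrices. -/
noncomputable def SymMat : Submodule ℂ (Matrix (Fin 3) (Fin 3) ℂ) where
  carrier := {X | X.IsSymm}
  add_mem' := fun ha hb => ha.add hb
  zero_mem' := Matrix.isSymm_zero
  smul_mem' := fun c _ ha => ha.smul c

/-- `q₃(X) = tr (adj X) = (x₂₂x₃₃ − x₂₃²) + (x₁₁x₃₃ − x₁₃²) + (x₁₁x₂₂ − x₁₂²)`. -/
def q3 (X : SymMat) : ℂ :=
  (X.1 1 1 * X.1 2 2 - X.1 1 2 ^ 2) + (X.1 0 0 * X.1 2 2 - X.1 0 2 ^ 2) +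
    (X.1 0 0 * X.1 1 1 - X.1 0 1 ^ 2)

/-- `q₂(X) = (x₂₂x₃₃ − x₂₃²) + (x₁₁x₃₃ − x₁₃²)`. -/
def q2 (X : SymMat) : ℂ :=
  (X.1 1 1 * X.1 2 2 - X.1 1 2 ^ 2) + (X.1 0 0 * X.1 2 2 - X.1 0 2 ^ 2)

/-- `q₁(X) = x₂₂x₃₃ − x₂₃²`. -/
def q1 (X : SymMat) : ℂ :=
  X.1 1 1 * X.1 2 2 - X.1 1 2 ^ 2

/-- The rank of a quadratic form `q`, i.e. the rank of the associated bilinear form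
`b(x,y) = q(x+y) − q(x) − q(y)`, is `r`. -/
def QuadRankEq (q : SymMat → ℂ) (r : ℕ) : Prop :=
  ∃ b : SymMat →ₗ[ℂ] SymMat →ₗ[ℂ] ℂ,
    (∀ X Y : SymMat, b X Y = q (X + Y) - q X - q Y) ∧
    Module.finrank ℂ (LinearMap.range b) = r

/-! ### Auxiliary constructions -/

/-- The symmetric matrix with given entries. -/
noncomputable def sm (a b c d e f : ℂ) : SymMat :=
  ⟨!![a, d, e; d, b, f; e, f, c], by
    show Matrix.IsSymm _
    unfold Matrix.IsSymm
    ext i j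
    fin_cases i <;> fin_cases j <;> rfl⟩

lemma sm_add (a b c d e f a' b' c' d' e' f' : ℂ) :
    sm a b c d e f + sm a' b' c' d' e' f' =
      sm (a + a') (b + b') (c + c') (d + d') (e + e') (f + f') := by
  apply Subtype.ext
  show (_ : Matrix (Fin 3) (Fin 3) ℂ) + _ = _
  ext i j
  fin_cases i <;> fin_cases j <;> simp [sm]

lemma sm_smul (r a b c d e f : ℂ) :
    r • sm a b c d e f = sm (r * a) (r * b) (r * c) (r * d) (r * e) (r * f) := by
  apply Subtype.ext
  show r • (_ : Matrix (Fin 3) (Fin 3) ℂ) = _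
  ext i j
  fin_cases i <;> fin_cases j <;> simp [sm]

lemma sm_entries (a b c d e f : ℂ) :
    (sm a b c d e f).1 0 0 = a ∧ (sm a b c d e f).1 1 1 = b ∧ (sm a b c d e f).1 2 2 = c ∧
    (sm a b c d e f).1 0 1 = d ∧ (sm a b c d e f).1 0 2 = e ∧ (sm a b c d e f).1 1 2 = f :=
  ⟨rfl, rfl, rfl, rfl, rfl, rfl⟩

/-- Build a linear map `(Fin 6 → ℂ) →ₗ SymMat` from six linear coordinate expressions. -/
noncomputable def psiMk (A B C D E F : (Fin 6 → ℂ) →ₗ[ℂ] ℂ) :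
    (Fin 6 → ℂ) →ₗ[ℂ] SymMat where
  toFun x := sm (A x) (B x) (C x) (D x) (E x) (F x)
  map_add' x y := by simp only [map_add, ← sm_add]
  map_smul' r x := by simp only [map_smul, smul_eq_mul, sm_smul, RingHom.id_apply]

lemma psiMk_apply (A B C D E F : (Fin 6 → ℂ) →ₗ[ℂ] ℂ) (x : Fin 6 → ℂ) :
    psiMk A B C D E F x = sm (A x) (B x) (C x) (D x) (E x) (F x) := rfl

lemma vec6_five {α : Type*} (a b c d e f : α) : ![a, b, c, d, e, f] 5 = f := rfl

/-- coordinate functional -/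
noncomputable def co (i : Fin 6) : (Fin 6 → ℂ) →ₗ[ℂ] ℂ := LinearMap.proj i

/-- The key rank computation lemma. -/
lemma quadRank_of_diag (q : SymMat → ℂ) (b : SymMat →ₗ[ℂ] SymMat →ₗ[ℂ] ℂ)
    (hq : ∀ X Y, b X Y = q (X + Y) - q X - q Y)
    (ψ : (Fin 6 → ℂ) →ₗ[ℂ] SymMat) (hψ : Function.Surjective ψ)
    (d : Fin 6 → ℂ)
    (hd : ∀ x y : Fin 6 → ℂ, b (ψ x) (ψ y) = ∑ j, d j * x j * y j)
    (r : ℕ)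
    (hr : ∀ (_ : DecidablePred fun i : Fin 6 => d i ≠ 0),
      Fintype.card {i : Fin 6 // d i ≠ 0} = r) :
    QuadRankEq q r := by
  classical
  refine ⟨b, hq, ?_⟩
  set T : Module.Dual ℂ SymMat →ₗ[ℂ] (Fin 6 → ℂ) :=
    LinearMap.pi fun j => LinearMap.applyₗ (ψ fun i => if j = i then 1 else 0) with hTdef
  have hT : Function.Injective T := by
    rw [← LinearMap.ker_eq_bot, eq_bot_iff]
    intro ℓ hℓ
    simp only [LinearMap.mem_ker] at hℓ
    have h0 : ∀ j, ℓ (ψ fun i => if j = i then 1 else 0) = 0 := by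
      intro j
      have := congrFun hℓ j
      simpa [hTdef] using this
    have hz : ℓ = 0 := by
      ext v
      obtain ⟨x, rfl⟩ := hψ v
      rw [pi_eq_sum_univ x, map_sum, map_sum]
      simp [h0]
    simp [hz]
  have h1 : Module.finrank ℂ (LinearMap.range b) =
      Module.finrank ℂ (LinearMap.range (T ∘ₗ b ∘ₗ ψ)) := by
    have e1 : LinearMap.range (T ∘ₗ b ∘ₗ ψ) =
        Submodule.map T (LinearMap.range b) := by
      rw [LinearMap.range_comp, LinearMap.range_comp, LinearMap.range_eq_top.2 hψ,
        Submodule.map_top]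
    rw [e1]
    exact (Submodule.equivMapOfInjective T hT _).finrank_eq
  have h2 : T ∘ₗ b ∘ₗ ψ = Matrix.mulVecLin (Matrix.diagonal d) := by
    apply LinearMap.ext
    intro x
    funext j
    have lhs : (T ∘ₗ b ∘ₗ ψ) x j = b (ψ x) (ψ fun i => if j = i then 1 else 0) := rfl
    rw [lhs, hd]
    rw [Finset.sum_eq_single j]
    · simp [Matrix.mulVecLin_apply, Matrix.mulVec_diagonal]
    · intro i _ hij
      simp [if_neg (Ne.symm hij).symm, hij]
      intro h; exact absurd h.symm hij
    · intro h; exact absurd (Finset.mem_univ j) h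
  rw [h1, h2]
  have : Matrix.rank (Matrix.diagonal d) = r := by
    rw [Matrix.rank_diagonal]
    exact hr _
  exact this

lemma symm_entry (X : SymMat) (i j : Fin 3) : X.1 j i = X.1 i j :=
  congrFun (congrFun X.2 i) j

lemma card_filter_eq {d : Fin 6 → ℂ} {s : Finset (Fin 6)} {r : ℕ}
    (inst : DecidablePred fun i : Fin 6 => d i ≠ 0)
    (hs : Finset.univ.filter (fun i : Fin 6 => d i ≠ 0) = s) (hc : s.card = r) :
    Fintype.card {i : Fin 6 // d i ≠ 0} = r := by
  rw [Fintype.card_subtype, hs, hc]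

/-! ### The three quadratic rank computations -/

set_option maxHeartbeats 2000000 in
/-- On the `6`-dimensional space of symmetric `3 × 3` complex matrices, the quadratic form
`q₃ = tr ∘ adj` has rank `6` (it is nondegenerate), `q₂` has rank `4`, and `q₁` has rank `3`.
(These are the projectivized tangent cones of singular hyperplane sections of `LG(3,6)`.) -/
theorem ranks_of_tangent_cone_quadrics :
    Module.finrank ℂ SymMat = 6 ∧
    (∀ X : SymMat, q3 X = (Matrix.adjugate X.1).trace) ∧
    QuadRankEq q3 6 ∧ QuadRankEq q2 4 ∧ QuadRankEq q1 3 := by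
  classical
  -- surjectivity helper entries
  have hsm : ∀ a b c d e f : ℂ,
      (sm a b c d e f).1 0 0 = a ∧ (sm a b c d e f).1 1 1 = b ∧ (sm a b c d e f).1 2 2 = c ∧
      (sm a b c d e f).1 0 1 = d ∧ (sm a b c d e f).1 0 2 = e ∧ (sm a b c d e f).1 1 2 = f :=
    sm_entries
  -- the standard coordinates map, for the dimension count
  have psi0_surj : Function.Surjective
      (psiMk (co 0) (co 1) (co 2) (co 3) (co 4) (co 5)) := by
    intro Y
    refine ⟨![Y.1 0 0, Y.1 1 1, Y.1 2 2, Y.1 0 1, Y.1 0 2, Y.1 1 2], ?_⟩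
    apply Subtype.ext
    ext i j
    fin_cases i <;> fin_cases j <;>
      simp [psiMk_apply, sm, co] <;>
      first
        | rfl
        | exact (symm_entry Y _ _)
  have psi0_inj : Function.Injective
      (psiMk (co 0) (co 1) (co 2) (co 3) (co 4) (co 5)) := by
    intro x y h
    have h' := congrArg Subtype.val h
    funext i
    fin_cases i
    · exact congrFun (congrFun h' 0) 0
    · exact congrFun (congrFun h' 1) 1
    · exact congrFun (congrFun h' 2) 2
    · exact congrFun (congrFun h' 0) 1
    · exact congrFun (congrFun h' 0) 2
    · exact congrFun (congrFun h' 1) 2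
  refine ⟨?_, ?_, ?_, ?_, ?_⟩
  · -- finrank = 6
    have e := LinearEquiv.ofBijective _ ⟨psi0_inj, psi0_surj⟩
    rw [← e.finrank_eq]
    simp
  · -- q3 = trace of adjugate
    intro X
    rw [Matrix.adjugate_fin_three]
    simp only [Matrix.trace, Matrix.diag_apply, Fin.sum_univ_three, Matrix.of_apply,
      Matrix.cons_val', Matrix.cons_val_zero, Matrix.cons_val_one, Matrix.head_cons,
      Matrix.empty_val', Matrix.cons_val_fin_one, Matrix.head_fin_const, Matrix.cons_val_two,
      Matrix.tail_cons]
    rw [q3, symm_entry X 0 1, symm_entry X 0 2, symm_entry X 1 2]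
    ring
  · -- q3 has rank 6
    refine quadRank_of_diag q3
      (LinearMap.mk₂ ℂ (fun X Y =>
        X.1 1 1 * Y.1 2 2 + X.1 2 2 * Y.1 1 1 + X.1 0 0 * Y.1 2 2 + X.1 2 2 * Y.1 0 0 +
          X.1 0 0 * Y.1 1 1 + X.1 1 1 * Y.1 0 0 - 2 * X.1 1 2 * Y.1 1 2 -
          2 * X.1 0 2 * Y.1 0 2 - 2 * X.1 0 1 * Y.1 0 1)
        (by intro X X' Y; simp [Matrix.add_apply]; ring)
        (by intro r X Y; simp [Matrix.smul_apply, smul_eq_mul]; ring)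
        (by intro X Y Y'; simp [Matrix.add_apply]; ring)
        (by intro r X Y; simp [Matrix.smul_apply, smul_eq_mul]; ring))
      ?_
      (psiMk (co 0 + co 1 + co 2) (co 0 - co 1 + co 2) (co 0 - co 2 - co 2) (co 3) (co 4) (co 5))
      ?_ ![6, -2, -6, -2, -2, -2] ?_ 6 ?_
    · intro X Y
      simp only [LinearMap.mk₂_apply, q3, Submodule.coe_add, Matrix.add_apply]
      ring
    · intro Y
      refine ⟨![(Y.1 0 0 + Y.1 1 1 + Y.1 2 2) / 3, (Y.1 0 0 - Y.1 1 1) / 2,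
        (Y.1 0 0 + Y.1 1 1 - 2 * Y.1 2 2) / 6, Y.1 0 1, Y.1 0 2, Y.1 1 2], ?_⟩
      apply Subtype.ext
      ext i j
      fin_cases i <;> fin_cases j <;>
        simp [psiMk_apply, sm, co, vec6_five] <;>
        (try simp only [symm_entry Y 0 1, symm_entry Y 0 2, symm_entry Y 1 2]) <;> ring
    · intro x y
      simp only [LinearMap.mk₂_apply, psiMk_apply, sm, co, Fin.sum_univ_six]
      simp [LinearMap.proj, vec6_five]
      ring
    · intro inst
      refine card_filter_eq inst (s := {0, 1, 2, 3, 4, 5}) ?_ rfl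
      ext i
      fin_cases i <;> simp [vec6_five] <;> norm_num
  · -- q2 has rank 4
    refine quadRank_of_diag q2
      (LinearMap.mk₂ ℂ (fun X Y =>
        X.1 1 1 * Y.1 2 2 + X.1 2 2 * Y.1 1 1 + X.1 0 0 * Y.1 2 2 + X.1 2 2 * Y.1 0 0 -
          2 * X.1 1 2 * Y.1 1 2 - 2 * X.1 0 2 * Y.1 0 2)
        (by intro X X' Y; simp [Matrix.add_apply]; ring)
        (by intro r X Y; simp [Matrix.smul_apply, smul_eq_mul]; ring)
        (by intro X Y Y'; simp [Matrix.add_apply]; ring)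
        (by intro r X Y; simp [Matrix.smul_apply, smul_eq_mul]; ring))
      ?_
      (psiMk (co 0 - co 1 + co 2) (co 0 - co 1 - co 2) (co 0 + co 1)
        (co 3) (co 4) (co 5))
      ?_ ![4, -4, 0, 0, -2, -2] ?_ 4 ?_
    · intro X Y
      simp only [LinearMap.mk₂_apply, q2, Submodule.coe_add, Matrix.add_apply]
      ring
    · intro Y
      refine ⟨![(Y.1 0 0 + Y.1 1 1 + 2 * Y.1 2 2) / 4, (2 * Y.1 2 2 - Y.1 0 0 - Y.1 1 1) / 4,
        (Y.1 0 0 - Y.1 1 1) / 2, Y.1 0 1, Y.1 0 2, Y.1 1 2], ?_⟩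
      apply Subtype.ext
      ext i j
      fin_cases i <;> fin_cases j <;>
        simp [psiMk_apply, sm, co, vec6_five] <;>
        (try simp only [symm_entry Y 0 1, symm_entry Y 0 2, symm_entry Y 1 2]) <;> ring
    · intro x y
      simp only [LinearMap.mk₂_apply, psiMk_apply, sm, co, Fin.sum_univ_six]
      simp [LinearMap.proj, vec6_five]
      ring
    · intro inst
      refine card_filter_eq inst (s := {0, 1, 4, 5}) ?_ rfl
      ext i
      fin_cases i <;> simp [vec6_five] <;> norm_num
  · -- q1 has rank 3
    refine quadRank_of_diag q1
      (LinearMap.mk₂ ℂ (fun X Y =>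
        X.1 1 1 * Y.1 2 2 + X.1 2 2 * Y.1 1 1 - 2 * X.1 1 2 * Y.1 1 2)
        (by intro X X' Y; simp [Matrix.add_apply]; ring)
        (by intro r X Y; simp [Matrix.smul_apply, smul_eq_mul]; ring)
        (by intro X Y Y'; simp [Matrix.add_apply]; ring)
        (by intro r X Y; simp [Matrix.smul_apply, smul_eq_mul]; ring))
      ?_
      (psiMk (co 0) (co 1 + co 2) (co 1 - co 2) (co 3) (co 4) (co 5))
      ?_ ![0, 2, -2, 0, 0, -2] ?_ 3 ?_
    · intro X Y
      simp only [LinearMap.mk₂_apply, q1, Submodule.coe_add, Matrix.add_apply]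
      ring
    · intro Y
      refine ⟨![Y.1 0 0, (Y.1 1 1 + Y.1 2 2) / 2, (Y.1 1 1 - Y.1 2 2) / 2,
        Y.1 0 1, Y.1 0 2, Y.1 1 2], ?_⟩
      apply Subtype.ext
      ext i j
      fin_cases i <;> fin_cases j <;>
        simp [psiMk_apply, sm, co, vec6_five] <;>
        (try simp only [symm_entry Y 0 1, symm_entry Y 0 2, symm_entry Y 1 2]) <;> ring
    · intro x y
      simp only [LinearMap.mk₂_apply, psiMk_apply, sm, co, Fin.sum_univ_six]
      simp [LinearMap.proj, vec6_five]
      ring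
    · intro inst
      refine card_filter_eq inst (s := {1, 2, 5}) ?_ rfl
      ext i
      fin_cases i <;> simp [vec6_five] <;> norm_num
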